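/- arXiv:1802.08355 — 5 statements merged into one kernel-verified Lean document; each statement's English description precedes it below -/
import Mathlib

section
/- For all n ≥ 1, m ≥ 2, and 0 ≤ ℓ ≤ m^n, the function q_{n,m} is monotone increasing in ℓ, satisfies k_{n,m}(ℓ) ≤ q_{n,m}(ℓ) ≤ k_{n,m}(ℓ) + 1, with q_{n,m}(0) = 0 = k_{n,m}(0) and q_{n,m}(m^n) = m = k_{n,m}(m^n). -/
/-- `q n m ℓ = 1 + ⌊(ℓ-1)(m-1)/(mⁿ-1)⌋` for `ℓ ≥ 1`, and `q n m 0 = 0`. -/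
def q (n m ℓ : ℕ) : ℕ := if ℓ = 0 then 0 else 1 + (ℓ - 1) * (m - 1) / (m ^ n - 1)

/-- `k n m ℓ = ⌊ℓ / m^(n-1)⌋`. -/
def k (n m ℓ : ℕ) : ℕ := ℓ / m ^ (n - 1)

/-!
Write `mⁿ = N * m` with `N = mⁿ⁻¹`. Clearing the floors, both bounds become inequalities
between `(ℓ - 1)(m - 1)` and multiples of `N m - 1`. For `k ≤ q`, with `y = ⌊ℓ / N⌋ ≤ m`,
`(ℓ - 1)(m - 1) - (y - 1)(N m - 1) = (ℓ - y N)(m - 1) + (m - y)(N - 1) ≥ 0`;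
for `q ≤ k + 1` it suffices that `(ℓ - 1)(m - 1) N ≤ ℓ (N m - N) ≤ ℓ (N m - 1)`.
-/

section BlockBounds

variable {N m ℓ : ℕ}

theorem sub_one_mul_le_sub_one_mul {y : ℕ} (hN : 0 < N) (hy : 0 < y) (hym : y ≤ m)
    (hyℓ : y * N ≤ ℓ) : (y - 1) * (N * m - 1) ≤ (ℓ - 1) * (m - 1) := by
  have hℓ : 1 ≤ ℓ := le_trans (Nat.mul_pos hy hN) hyℓ
  have hNm : 1 ≤ N * m := Nat.mul_pos hN (by omega)
  zify [hy, hℓ, hNm, (by omega : 1 ≤ m)]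
  have hyℓ' : (y : ℤ) * N ≤ ℓ := by exact_mod_cast hyℓ
  linarith [mul_nonneg (sub_nonneg.mpr hyℓ') (by omega : (0 : ℤ) ≤ m - 1),
    mul_nonneg (by omega : (0 : ℤ) ≤ m - y) (by omega : (0 : ℤ) ≤ N - 1)]

theorem div_le_one_add_sub_one_mul_div (hNm : 1 < N * m) (hℓ : ℓ ≤ N * m) :
    ℓ / N ≤ 1 + (ℓ - 1) * (m - 1) / (N * m - 1) := by
  have hN : 0 < N := Nat.pos_of_mul_pos_right (by omega : 0 < N * m)
  rcases Nat.eq_zero_or_pos (ℓ / N) with hy | hy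
  · exact hy ▸ Nat.zero_le _
  have hym : ℓ / N ≤ m := by
    simpa [Nat.mul_div_cancel_left m hN] using Nat.div_le_div_right (c := N) hℓ
  have := (Nat.le_div_iff_mul_le (by omega)).mpr
    (sub_one_mul_le_sub_one_mul hN hy hym (Nat.div_mul_le_self ℓ N))
  omega

theorem sub_one_mul_div_le_div (hNm : 1 < N * m) :
    (ℓ - 1) * (m - 1) / (N * m - 1) ≤ ℓ / N := by
  have hN : 0 < N := Nat.pos_of_mul_pos_right (by omega : 0 < N * m)
  set x := (ℓ - 1) * (m - 1) / (N * m - 1)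
  rw [Nat.le_div_iff_mul_le hN]
  refine Nat.le_of_mul_le_mul_right ?_ (by omega : 0 < N * m - 1)
  calc x * N * (N * m - 1) = x * (N * m - 1) * N := by ring
    _ ≤ (ℓ - 1) * (m - 1) * N := Nat.mul_le_mul_right N (Nat.div_mul_le_self _ _)
    _ ≤ ℓ * ((m - 1) * N) := by
      rw [mul_assoc]
      exact Nat.mul_le_mul_right _ (Nat.sub_le ℓ 1)
    _ ≤ ℓ * (N * m - 1) := by
      refine Nat.mul_le_mul_left ℓ ?_
      rw [Nat.sub_one_mul, mul_comm m N]
      omega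

end BlockBounds

section QK

variable {n m ℓ : ℕ}

theorem q_monotone (n m : ℕ) : Monotone (q n m) := by
  intro ℓ₁ ℓ₂ h
  unfold q
  split_ifs
  · exact le_rfl
  · exact Nat.zero_le _
  · omega
  · gcongr

theorem one_lt_pow_sub_one_mul (hn : n ≠ 0) (hm : 1 < m) : 1 < m ^ (n - 1) * m := by
  rw [pow_sub_one_mul hn]
  exact Nat.one_lt_pow hn hm

theorem k_le_q (hn : n ≠ 0) (hm : 1 < m) (hℓ : ℓ ≤ m ^ n) : k n m ℓ ≤ q n m ℓ := by
  unfold q k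
  rw [← pow_sub_one_mul hn] at hℓ ⊢
  split_ifs with hℓ0
  · simp [hℓ0]
  · exact div_le_one_add_sub_one_mul_div (one_lt_pow_sub_one_mul hn hm) hℓ

theorem q_le_k_add_one (hn : n ≠ 0) (hm : 1 < m) : q n m ℓ ≤ k n m ℓ + 1 := by
  rw [q, k, ← pow_sub_one_mul hn]
  have := sub_one_mul_div_le_div (ℓ := ℓ) (one_lt_pow_sub_one_mul hn hm)
  split_ifs
  · exact Nat.zero_le _
  · omega

theorem q_pow_self (hn : n ≠ 0) (hm : 1 < m) : q n m (m ^ n) = m := by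
  have hpow : 1 < m ^ n := Nat.one_lt_pow hn hm
  rw [q, if_neg (by omega), Nat.mul_div_cancel_left _ (by omega)]
  omega

theorem k_pow_self (hn : n ≠ 0) (hm : 0 < m) : k n m (m ^ n) = m := by
  rw [k, ← pow_sub_one_mul hn, Nat.mul_div_cancel_left _ (by positivity)]

end QK

theorem stmt4 (n m : ℕ) (hn : 1 ≤ n) (hm : 2 ≤ m) :
    (∀ ℓ₁ ℓ₂, ℓ₁ ≤ ℓ₂ → ℓ₂ ≤ m ^ n → q n m ℓ₁ ≤ q n m ℓ₂) ∧
    (∀ ℓ, ℓ ≤ m ^ n → k n m ℓ ≤ q n m ℓ ∧ q n m ℓ ≤ k n m ℓ + 1) ∧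
    q n m 0 = 0 ∧ k n m 0 = 0 ∧ q n m (m ^ n) = m ∧ k n m (m ^ n) = m := by
  have hn₀ : n ≠ 0 := by omega
  exact ⟨fun _ _ h _ ↦ q_monotone n m h,
    fun _ hℓ ↦ ⟨k_le_q hn₀ hm hℓ, q_le_k_add_one hn₀ hm⟩,
    by simp [q], by simp [k], q_pow_self hn₀ hm, k_pow_self hn₀ (by omega)⟩
end

section
/- Let n ≥ 1, m ≥ 2, and ℓ_a, ℓ_b with 0 ≤ ℓ_b ≤ ℓ_a ≤ m^n and ℓ_a + ℓ_b < m^n. Then q_{n,m}(ℓ_a + ℓ_b) equals either q_{n,m}(ℓ_a) + q_{n,m}(ℓ_b) or q_{n,m}(ℓ_a) + q_{n,m}(ℓ_b) - 1. -/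
theorem stmt6 (n m ℓa ℓb : ℕ) (hn : 1 ≤ n) (hm : 2 ≤ m)
    (hba : ℓb ≤ ℓa) (ha : ℓa ≤ m ^ n) (hab : ℓa + ℓb < m ^ n) :
    q n m (ℓa + ℓb) = q n m ℓa + q n m ℓb ∨
    q n m (ℓa + ℓb) + 1 = q n m ℓa + q n m ℓb := by
  rcases Nat.eq_zero_or_pos ℓb with hb0 | hb1
  · left; subst hb0; simp [q]
  have ha1 : 1 ≤ ℓa := le_trans hb1 hba
  set c := m - 1 with hcdef
  set D := m ^ n - 1 with hDdef
  have hc : 1 ≤ c := by omega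
  have hmn : m ≤ m ^ n := Nat.le_self_pow (by omega) m
  have hD1 : 1 ≤ D := by omega
  have hdvd : c ∣ D := by
    have := Nat.sub_dvd_pow_sub_pow m 1 n
    simpa using this
  obtain ⟨S, hS⟩ := hdvd
  have hS1 : 1 ≤ S := by
    rcases Nat.eq_zero_or_pos S with h | h
    · simp [h] at hS; omega
    · exact h
  have key : ∀ x : ℕ, x * c % D ≤ D - c := by
    intro x
    have h1 : x * c % D = c * (x % S) := by
      rw [hS, mul_comm x c, Nat.mul_mod_mul_left]
    have h2 : x % S ≤ S - 1 := by
      have := Nat.mod_lt x hS1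
      omega
    have h3 : c * (x % S) ≤ c * (S - 1) := Nat.mul_le_mul_left c h2
    have h4 : c * (S - 1) + c = c * S := by
      rw [← Nat.mul_succ]; congr 1; omega
    have h5 : D = c * S := hS
    omega
  set A := (ℓa - 1) * c / D with hAdef
  set B := (ℓb - 1) * c / D with hBdef
  set rA := (ℓa - 1) * c % D with hrAdef
  set rB := (ℓb - 1) * c % D with hrBdef
  have eA : (ℓa - 1) * c = D * A + rA := (Nat.div_add_mod _ _).symm
  have eB : (ℓb - 1) * c = D * B + rB := (Nat.div_add_mod _ _).symm
  have hrA : rA ≤ D - c := key _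
  have hrB : rB ≤ D - c := key _
  have esum : (ℓa + ℓb - 1) * c = D * (A + B) + (rA + rB + c) := by
    have : ℓa + ℓb - 1 = (ℓa - 1) + (ℓb - 1) + 1 := by omega
    rw [this, Nat.add_mul, Nat.add_mul, eA, eB]
    ring
  have hT : rA + rB + c < 2 * D := by omega
  set t := (rA + rB + c) / D with htdef
  have hdiv : (ℓa + ℓb - 1) * c / D = A + B + t := by
    rw [esum, Nat.mul_add_div (by omega)]
  have ht1 : t < 2 :=
    Nat.div_lt_of_lt_mul (by omega)
  have hqab : q n m (ℓa + ℓb) = 1 + (A + B + t) := by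
    rw [q, if_neg (by omega), hdiv]
  have hqa : q n m ℓa = 1 + A := by rw [q, if_neg (by omega)]
  have hqb : q n m ℓb = 1 + B := by rw [q, if_neg (by omega)]
  clear_value A B rA rB t
  clear hAdef hBdef hrAdef hrBdef htdef hdiv
  omega
end

section
/- Let n ≥ 1 and m ≥ 2. If 1 ≤ ℓ_b < m^n and q_{n,m}(ℓ_b + 1) = q_{n,m}(ℓ_b) + 1, then ℓ_b = q_{n,m}(ℓ_b)·(m^n - 1)/(m - 1). -/
theorem stmt8 (n m ℓb : ℕ) (hn : 1 ≤ n) (hm : 2 ≤ m)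
    (h1 : 1 ≤ ℓb) (h2 : ℓb < m ^ n) (hq : q n m (ℓb + 1) = q n m ℓb + 1) :
    ℓb = q n m ℓb * ((m ^ n - 1) / (m - 1)) := by
  have hd0 : 0 < m - 1 := by omega
  have hD0 : 0 < m ^ n - 1 := by
    have : 2 ≤ m ^ n := le_trans hm (Nat.le_self_pow (by omega) m)
    omega
  have hdvd : (m - 1) ∣ (m ^ n - 1) := by
    simpa using Nat.sub_dvd_pow_sub_pow m 1 n
  simp only [q, if_neg (by omega : ℓb ≠ 0), if_neg (by omega : ℓb + 1 ≠ 0),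
    Nat.add_sub_cancel] at hq ⊢
  set d := m - 1
  set D := m ^ n - 1
  set k := ℓb * d / D with hk
  have hq' : (ℓb - 1) * d / D + 1 = k := by omega
  have hle : k * D ≤ ℓb * d := by rw [hk]; exact Nat.div_mul_le_self _ _
  have hlt : (ℓb - 1) * d < k * D := (Nat.div_lt_iff_lt_mul hD0).mp (by omega)
  have hℓd : ℓb * d = (ℓb - 1) * d + d := by
    conv_lhs => rw [show ℓb = ℓb - 1 + 1 by omega]
    rw [add_mul, one_mul]
  obtain ⟨e, he⟩ := hdvd
  have hkD : k * D = d * (k * e) := by rw [he]; ring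
  have hbd : d * (k * e) ≤ d * ℓb := by rw [← hkD, mul_comm d ℓb]; exact hle
  have hbd2 : d * ℓb < d * (k * e + 1) := by
    rw [mul_add, mul_one, ← hkD, mul_comm d ℓb]; omega
  have h3 : k * e ≤ ℓb := Nat.le_of_mul_le_mul_left hbd hd0
  have h4 : ℓb < k * e + 1 := Nat.lt_of_mul_lt_mul_left hbd2
  have hℓb : ℓb = k * e := by omega
  have hDd : D / d = e := by rw [he]; exact Nat.mul_div_cancel_left e hd0
  rw [show 1 + (ℓb - 1) * d / D = k by omega, hDd]
  exact hℓb
end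

section
/- For n ≥ 1 and m ≥ 2, the Sierpinski graph S(n,m) has exactly m(m^n - 1)/2 edges, i.e. |E_{S(n,m)}| = m(m^n - 1)/2. -/
/-- The Sierpinski graph `S(n,m)` (Klavžar–Milutinović representation). -/
def sierpinski (n m : ℕ) : SimpleGraph (Fin n → Fin m) where
  Adj u v := ∃ h : Fin n,
    (∀ i, i < h → u i = v i) ∧ u h ≠ v h ∧ ∀ j, h < j → u j = v h ∧ v j = u h
  symm := by
    constructor
    rintro u v ⟨h, h1, h2, h3⟩
    exact ⟨h, fun i hi => (h1 i hi).symm, h2.symm,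
      fun j hj => ⟨(h3 j hj).2, (h3 j hj).1⟩⟩
  loopless := by
    constructor
    rintro u ⟨h, _, h2, _⟩
    exact h2 rfl

instance sierpinskiDecAdj (n m : ℕ) : DecidableRel (sierpinski n m).Adj := fun u v =>
  inferInstanceAs (Decidable (∃ h : Fin n,
    (∀ i, i < h → u i = v i) ∧ u h ≠ v h ∧ ∀ j, h < j → u j = v h ∧ v j = u h))

/-- One endpoint of a generic edge of the Sierpinski graph. -/
def sierpVert (n m : ℕ) (h : Fin n) (pre : Fin h → Fin m) (a b : Fin m) :
    Fin n → Fin m :=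
  fun i => if hi : (i : ℕ) < (h : ℕ) then pre ⟨i, hi⟩ else if i = h then a else b

lemma sierpVert_lt {n m : ℕ} (h : Fin n) (pre : Fin h → Fin m) (a b : Fin m)
    (i : Fin n) (hi : (i : ℕ) < (h : ℕ)) : sierpVert n m h pre a b i = pre ⟨i, hi⟩ := by
  simp [sierpVert, hi]

lemma sierpVert_eq {n m : ℕ} (h : Fin n) (pre : Fin h → Fin m) (a b : Fin m) :
    sierpVert n m h pre a b h = a := by
  simp [sierpVert]

lemma sierpVert_gt {n m : ℕ} (h : Fin n) (pre : Fin h → Fin m) (a b : Fin m)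
    (j : Fin n) (hj : h < j) : sierpVert n m h pre a b j = b := by
  have h1 : ¬ (j : ℕ) < (h : ℕ) := by omega
  have h2 : j ≠ h := by
    intro e; subst e; exact absurd rfl (ne_of_gt hj)
  simp [sierpVert, h1, h2]

def sierpDartMap (n m : ℕ) :
    (Σ h : Fin n, (Fin h → Fin m) × {p : Fin m × Fin m // p.1 ≠ p.2}) →
      (sierpinski n m).Dart :=
  fun x =>
    ⟨(sierpVert n m x.1 x.2.1 x.2.2.1.1 x.2.2.1.2,
      sierpVert n m x.1 x.2.1 x.2.2.1.2 x.2.2.1.1), by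
      refine ⟨x.1, ?_, ?_, ?_⟩ <;> dsimp only
      · intro i hi
        rw [sierpVert_lt _ _ _ _ i hi, sierpVert_lt _ _ _ _ i hi]
      · rw [sierpVert_eq, sierpVert_eq]; exact x.2.2.2
      · intro j hj
        rw [sierpVert_gt _ _ _ _ j hj, sierpVert_gt _ _ _ _ j hj,
          sierpVert_eq, sierpVert_eq]
        exact ⟨rfl, rfl⟩⟩

lemma sierpDartMap_bijective (n m : ℕ) : Function.Bijective (sierpDartMap n m) := by
  constructor
  · rintro ⟨h, pre, ⟨⟨a, b⟩, hab⟩⟩ ⟨h', pre', ⟨⟨a', b'⟩, hab'⟩⟩ heq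
    have hu : sierpVert n m h pre a b = sierpVert n m h' pre' a' b' := by
      have := congrArg (fun d => d.toProd.1) heq
      simpa [sierpDartMap] using this
    have hv : sierpVert n m h pre b a = sierpVert n m h' pre' b' a' := by
      have := congrArg (fun d => d.toProd.2) heq
      simpa [sierpDartMap] using this
    have hhh : h = h' := by
      by_contra hne
      rcases lt_or_gt_of_ne hne with hlt | hlt
      · -- h < h' : at coordinate h, left differs but right agrees
        have e1 : sierpVert n m h' pre' a' b' h = pre' ⟨h, hlt⟩ :=
          sierpVert_lt _ _ _ _ h hlt
        have e2 : sierpVert n m h' pre' b' a' h = pre' ⟨h, hlt⟩ :=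
          sierpVert_lt _ _ _ _ h hlt
        have : a = b := by
          have := (sierpVert_eq h pre a b).symm.trans
            ((congrFun hu h).trans (e1.trans (e2.symm.trans (congrFun hv h).symm)))
          rwa [sierpVert_eq] at this
        exact hab this
      · have e1 : sierpVert n m h pre a b h' = pre ⟨h', hlt⟩ :=
          sierpVert_lt _ _ _ _ h' hlt
        have e2 : sierpVert n m h pre b a h' = pre ⟨h', hlt⟩ :=
          sierpVert_lt _ _ _ _ h' hlt
        have : a' = b' := by
          have := (sierpVert_eq h' pre' a' b').symm.trans
            ((congrFun hu h').symm.trans (e1.trans (e2.symm.trans (congrFun hv h'))))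
          rwa [sierpVert_eq] at this
        exact hab' this
    subst hhh
    have ha : a = a' := by
      have := congrFun hu h
      rwa [sierpVert_eq, sierpVert_eq] at this
    have hb : b = b' := by
      have := congrFun hv h
      rwa [sierpVert_eq, sierpVert_eq] at this
    have hpre : pre = pre' := by
      funext i
      have hj : ((⟨(i : ℕ), lt_trans i.isLt h.isLt⟩ : Fin n) : ℕ) < (h : ℕ) := i.isLt
      have := congrFun hu ⟨(i : ℕ), lt_trans i.isLt h.isLt⟩
      rw [sierpVert_lt _ _ _ _ _ hj, sierpVert_lt _ _ _ _ _ hj] at this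
      simpa using this
    subst ha; subst hb; subst hpre; rfl
  · rintro ⟨⟨u, v⟩, hadj⟩
    obtain ⟨h, h1, h2, h3⟩ := hadj
    refine ⟨⟨h, ⟨fun i => u ⟨i, lt_trans i.isLt h.isLt⟩, ⟨(u h, v h), h2⟩⟩⟩, ?_⟩
    apply SimpleGraph.Dart.ext
    dsimp only [sierpDartMap]
    refine Prod.ext ?_ ?_ <;> funext i <;> dsimp only
    · -- first component
      rcases lt_trichotomy (i : ℕ) (h : ℕ) with hlt | heq | hgt
      · rw [sierpVert_lt _ _ _ _ i hlt]
      · have : i = h := Fin.ext heq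
        subst this
        rw [sierpVert_eq]
      · have hhi : h < i := hgt
        rw [sierpVert_gt _ _ _ _ i hhi]
        exact ((h3 i hhi).1).symm
    · rcases lt_trichotomy (i : ℕ) (h : ℕ) with hlt | heq | hgt
      · rw [sierpVert_lt _ _ _ _ i hlt]
        exact h1 i hlt
      · have : i = h := Fin.ext heq
        subst this
        rw [sierpVert_eq]
      · have hhi : h < i := hgt
        rw [sierpVert_gt _ _ _ _ i hhi]
        exact ((h3 i hhi).2).symm

lemma geom_nat (m : ℕ) (hm : 1 ≤ m) (n : ℕ) :
    (∑ i ∈ Finset.range n, m ^ i) * (m - 1) = m ^ n - 1 := by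
  have h1 : (1 : ℕ) ≤ m ^ n := Nat.one_le_pow _ _ hm
  zify [hm, h1]
  exact geom_sum_mul _ n

theorem stmt17 (n m : ℕ) (hn : 1 ≤ n) (hm : 2 ≤ m) :
    ((sierpinski n m).edgeSet).ncard = m * (m ^ n - 1) / 2 := by
  classical
  have hdart : Fintype.card ((sierpinski n m).Dart) =
      Fintype.card (Σ h : Fin n, (Fin h → Fin m) × {p : Fin m × Fin m // p.1 ≠ p.2}) :=
    (Fintype.card_of_bijective (sierpDartMap_bijective n m)).symm
  have hsub : Fintype.card {p : Fin m × Fin m // p.1 ≠ p.2} = m * m - m := by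
    have hdiag : Fintype.card {p : Fin m × Fin m // p.1 = p.2} = m := by
      have e : {p : Fin m × Fin m // p.1 = p.2} ≃ Fin m :=
        ⟨fun p => p.1.1, fun a => ⟨(a, a), rfl⟩, by rintro ⟨⟨a, b⟩, h⟩; cases h; rfl,
          fun a => rfl⟩
      rw [Fintype.card_congr e, Fintype.card_fin]
    have := Fintype.card_subtype_compl (p := fun p : Fin m × Fin m => p.1 = p.2)
    simp only [Fintype.card_prod, Fintype.card_fin] at this
    rw [hdiag] at this
    exact this
  have hcard : Fintype.card (Σ h : Fin n, (Fin h → Fin m) × {p : Fin m × Fin m // p.1 ≠ p.2})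
      = m * (m ^ n - 1) := by
    rw [Fintype.card_sigma]
    simp only [Fintype.card_prod, Fintype.card_fun, Fintype.card_fin, hsub]
    rw [Fin.sum_univ_eq_sum_range (fun i => m ^ i * (m * m - m))]
    have : ∑ i ∈ Finset.range n, m ^ i * (m * m - m)
        = (∑ i ∈ Finset.range n, m ^ i) * (m - 1) * m := by
      rw [Finset.sum_mul, Finset.sum_mul]
      refine Finset.sum_congr rfl fun i _ => ?_
      have hmm : m * m - m = (m - 1) * m := by rw [Nat.sub_mul, one_mul]
      rw [hmm, mul_assoc]
    rw [this, geom_nat m (by omega) n, mul_comm]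
  have h2e : 2 * ((sierpinski n m).edgeFinset).card = m * (m ^ n - 1) := by
    rw [← SimpleGraph.dart_card_eq_twice_card_edges, hdart, hcard]
  have hncard : ((sierpinski n m).edgeSet).ncard = ((sierpinski n m).edgeFinset).card := by
    rw [Set.ncard_eq_toFinset_card']
    exact congrArg Finset.card (by ext e; simp)
  omega
end

section
/- Assuming that initial segments of lexicographic order minimize edge-boundary in S(n,m), the bisection width of S(n,m), i.e. the minimum edge-boundary of a set of ⌊m^n/2⌋ vertices, equals m²/4 if m is even, and n·⌊m/2⌋² + ⌊m/2⌋ if m is odd. Equivalently, B(n, ⌊m^n/2⌋) = m²/4 for m even, and B(n, ⌊m^n/2⌋) = n·⌊m/2⌋² + ⌊m/2⌋ for m odd, for all n ≥ 1. -/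
/-- Recurrence for the edge-boundary of the initial lexicographic segment in `S(n,m)`. -/
def B (m : ℕ) : ℕ → ℕ → ℤ
  | 0, _ => 0
  | n + 1, ℓ =>
    ((ℓ / m ^ n : ℕ) : ℤ) * ((m : ℤ) - (ℓ / m ^ n : ℕ)) + B m n (ℓ % m ^ n) +
      (if q n m (ℓ % m ^ n) ≤ ℓ / m ^ n then -(q n m (ℓ % m ^ n) : ℤ)
       else (q n m (ℓ % m ^ n) : ℤ) - 2 * ((ℓ / m ^ n : ℕ) : ℤ))

/-!
Write `ℓ = ⌊mⁿ⁺¹/2⌋` in base `m`. For even `m` it is the single leading digit `m/2` followed by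
zeros, so only the top-level term `(m/2)(m - m/2)` survives. For odd `m = 2t+1` it is the digit
`t` followed by `⌊mⁿ/2⌋`, and `q n m ⌊mⁿ/2⌋ = t` for `n ≥ 1`; hence each level contributes
`t(t+1) - t = t²` on top of the previous one, while the bottom level contributes `t(t+1)`.
-/

lemma q_zero_right (n m : ℕ) : q n m 0 = 0 := if_pos rfl

lemma B_zero_right (m n : ℕ) : B m n 0 = 0 := by
  induction n with
  | zero => rfl
  | succ n ih => simp [B, q_zero_right, ih]

lemma B_succ_mul_pow_add (m n a r : ℕ) (hr : r < m ^ n) :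
    B m (n + 1) (a * m ^ n + r) = a * ((m : ℤ) - a) + B m n r +
      (if q n m r ≤ a then -(q n m r : ℤ) else (q n m r : ℤ) - 2 * a) := by
  have hdiv : (a * m ^ n + r) / m ^ n = a := by
    rw [add_comm, Nat.add_mul_div_right _ _ (by omega), Nat.div_eq_of_lt hr, zero_add]
  have hmod : (a * m ^ n + r) % m ^ n = r := by
    rw [add_comm, Nat.add_mul_mod_self_right, Nat.mod_eq_of_lt hr]
  rw [B, hdiv, hmod]

lemma pow_succ_div_two_of_even {m : ℕ} (hm : Even m) (n : ℕ) :
    m ^ (n + 1) / 2 = m / 2 * m ^ n := by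
  obtain ⟨u, rfl⟩ := hm
  rw [pow_succ, ← two_mul, Nat.mul_div_cancel_left _ two_pos, mul_comm, mul_assoc,
    Nat.mul_div_cancel_left _ two_pos]

lemma pow_succ_div_two_of_odd {m : ℕ} (hm : Odd m) (n : ℕ) :
    m ^ (n + 1) / 2 = m / 2 * m ^ n + m ^ n / 2 := by
  obtain ⟨t, rfl⟩ := hm
  have h : (2 * t + 1) ^ (n + 1) = (2 * t + 1) ^ n + 2 * (t * (2 * t + 1) ^ n) := by ring
  rw [h, Nat.add_mul_div_left _ _ two_pos, add_comm]
  congr 2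
  omega

lemma q_pow_div_two_of_odd {m n : ℕ} (hm : Odd m) (hn : 1 ≤ n) : q n m (m ^ n / 2) = m / 2 := by
  obtain ⟨t, rfl⟩ := hm
  obtain ⟨s, hs⟩ : Odd ((2 * t + 1) ^ n) := (odd_two_mul_add_one t).pow
  rcases Nat.eq_zero_or_pos t with rfl | ht
  · simp [q_zero_right]
  have hts : t ≤ s := by
    have := Nat.le_self_pow (by omega : n ≠ 0) (2 * t + 1)
    omega
  -- with `mⁿ = 2s + 1` and `m = 2t + 1`, the defining quotient is `(s - 1) t / s = t - 1`
  have hquot : (s - 1) * t / s = t - 1 := by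
    obtain ⟨s', rfl⟩ : ∃ s', s = s' + 1 := ⟨s - 1, by omega⟩
    obtain ⟨t', rfl⟩ : ∃ t', t = t' + 1 := ⟨t - 1, by omega⟩
    simp only [Nat.add_sub_cancel]
    exact Nat.div_eq_of_lt_le (by nlinarith) (by nlinarith)
  rw [q, hs, if_neg (by omega), show 2 * t + 1 - 1 = 2 * t by omega,
    show 2 * s + 1 - 1 = 2 * s by omega, show (2 * s + 1) / 2 = s by omega,
    mul_left_comm, Nat.mul_div_mul_left _ _ two_pos, hquot]
  omega

lemma B_pow_succ_div_two_of_even {m : ℕ} (hm : Even m) (n : ℕ) :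
    B m (n + 1) (m ^ (n + 1) / 2) = ((m / 2 : ℕ) : ℤ) ^ 2 := by
  rcases Nat.eq_zero_or_pos m with rfl | hm₀
  · simp [B_zero_right]
  rw [pow_succ_div_two_of_even hm, ← add_zero (m / 2 * m ^ n),
    B_succ_mul_pow_add _ _ _ _ (pow_pos hm₀ n), B_zero_right, q_zero_right, if_pos (Nat.zero_le _)]
  obtain ⟨u, rfl⟩ := hm
  rw [← two_mul, Nat.mul_div_cancel_left _ two_pos]
  push_cast
  ring

lemma B_pow_succ_div_two_of_odd {m : ℕ} (hm : Odd m) (n : ℕ) :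
    B m (n + 1) (m ^ (n + 1) / 2) =
      ((m / 2 : ℕ) : ℤ) ^ 2 + (m / 2 : ℕ) + B m n (m ^ n / 2) - q n m (m ^ n / 2) := by
  have hq : q n m (m ^ n / 2) ≤ m / 2 := by
    rcases n with _ | n
    · simp [q_zero_right]
    · exact (q_pow_div_two_of_odd hm n.succ_pos).le
  rw [pow_succ_div_two_of_odd hm,
    B_succ_mul_pow_add _ _ _ _ (Nat.div_lt_self (pow_pos hm.pos n) one_lt_two), if_pos hq]
  obtain ⟨t, rfl⟩ := hm
  rw [show (2 * t + 1) / 2 = t by omega]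
  push_cast
  ring

lemma B_pow_div_two_of_odd {m : ℕ} (hm : Odd m) {n : ℕ} (hn : 1 ≤ n) :
    B m n (m ^ n / 2) = n * ((m / 2 : ℕ) : ℤ) ^ 2 + (m / 2 : ℕ) := by
  induction n, hn using Nat.le_induction with
  | base =>
    rw [← zero_add 1, B_pow_succ_div_two_of_odd hm]
    norm_num [B, q_zero_right]
  | succ n hn ih =>
    rw [B_pow_succ_div_two_of_odd hm, ih, q_pow_div_two_of_odd hm hn]
    push_cast
    ring

theorem stmt18_general (n m : ℕ) (hn : 1 ≤ n) :
    (Even m → B m n (m ^ n / 2) = ((m / 2 : ℕ) : ℤ) ^ 2) ∧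
    (Odd m → B m n (m ^ n / 2)
      = (n : ℤ) * ((m / 2 : ℕ) : ℤ) ^ 2 + ((m / 2 : ℕ) : ℤ)) := by
  obtain ⟨k, rfl⟩ : ∃ k, n = k + 1 := ⟨n - 1, by omega⟩
  exact ⟨fun hm => B_pow_succ_div_two_of_even hm k, fun hm => B_pow_div_two_of_odd hm hn⟩

theorem stmt18 (n m : ℕ) (hn : 1 ≤ n) (hm : 2 ≤ m) :
    (Even m → B m n (m ^ n / 2) = ((m / 2 : ℕ) : ℤ) ^ 2) ∧
    (Odd m → B m n (m ^ n / 2)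
      = (n : ℤ) * ((m / 2 : ℕ) : ℤ) ^ 2 + ((m / 2 : ℕ) : ℤ)) :=
  stmt18_general n m hn
end
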